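/- Let G be a finite connected graph on n ≥ d+1 vertices with diameter at least d. Then QEC(P_{d+1}) ≤ QEC(G), where P_{d+1} is the path on d+1 vertices. -/

import Mathlib

/-- The quadratic embedding constant of a finite graph. -/
noncomputable def QEC {V : Type*} [Fintype V] (G : SimpleGraph V) : ℝ :=
  sSup {x : ℝ | ∃ f : V → ℝ,
    (∑ i, f i ^ 2) = 1 ∧ (∑ i, f i) = 0 ∧
    x = ∑ i, ∑ j, (G.dist i j : ℝ) * f i * f j}

/-- The quadratic embedding constant of the path P_n, whose distance matrix is [|i-j|]. -/
noncomputable def qecPath (n : ℕ) : ℝ :=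
  sSup {x : ℝ | ∃ f : Fin n → ℝ,
    (∑ i, f i ^ 2) = 1 ∧ (∑ i, f i) = 0 ∧
    x = ∑ i, ∑ j, |(i.val : ℝ) - (j.val : ℝ)| * f i * f j}

lemma dist_getVert_add_le {V : Type*} (G : SimpleGraph V) (hG : G.Connected)
    {u v : V} (p : G.Walk u v) (k m : ℕ) :
    G.dist (p.getVert k) (p.getVert (k + m)) ≤ m := by
  induction m with
  | zero => simp [SimpleGraph.dist_self]
  | succ m ih =>
    have step : G.dist (p.getVert (k + m)) (p.getVert (k + m + 1)) ≤ 1 := by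
      by_cases h : k + m < p.length
      · exact le_of_eq (SimpleGraph.dist_eq_one_iff_adj.mpr (p.adj_getVert_succ h))
      · push_neg at h
        rw [p.getVert_of_length_le h, p.getVert_of_length_le (h.trans (Nat.le_succ _))]
        simp [SimpleGraph.dist_self]
    calc G.dist (p.getVert k) (p.getVert (k + (m + 1)))
        ≤ G.dist (p.getVert k) (p.getVert (k + m)) +
          G.dist (p.getVert (k + m)) (p.getVert (k + m + 1)) := by
          rw [show k + (m + 1) = k + m + 1 from rfl]; exact hG.dist_triangle
      _ ≤ m + 1 := add_le_add ih step

lemma dist_getVert_eq {V : Type*} (G : SimpleGraph V) (hG : G.Connected)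
    {u v : V} (p : G.Walk u v) (hp : p.length = G.dist u v)
    {k l : ℕ} (hkl : k ≤ l) (hl : l ≤ p.length) :
    G.dist (p.getVert k) (p.getVert l) = l - k := by
  have hle : G.dist (p.getVert k) (p.getVert l) ≤ l - k := by
    have := dist_getVert_add_le G hG p k (l - k)
    rwa [Nat.add_sub_cancel' hkl] at this
  have h1 : G.dist u (p.getVert k) ≤ k := by
    have := dist_getVert_add_le G hG p 0 k
    simpa using this
  have h2 : G.dist (p.getVert l) v ≤ p.length - l := by
    have := dist_getVert_add_le G hG p l (p.length - l)
    rwa [Nat.add_sub_cancel' hl, p.getVert_length] at this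
  have htri : G.dist u v ≤ G.dist u (p.getVert k) +
      (G.dist (p.getVert k) (p.getVert l) + G.dist (p.getVert l) v) :=
    le_trans hG.dist_triangle (add_le_add_right hG.dist_triangle _)
  rw [← hp] at htri
  omega

lemma qec_set_bddAbove {V : Type*} [Fintype V] (G : SimpleGraph V) :
    BddAbove {x : ℝ | ∃ f : V → ℝ,
      (∑ i, f i ^ 2) = 1 ∧ (∑ i, f i) = 0 ∧
      x = ∑ i, ∑ j, (G.dist i j : ℝ) * f i * f j} := by
  set M : ℕ := Finset.univ.sup fun v : V => Finset.univ.sup fun w : V => G.dist v w with hM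
  refine ⟨(M : ℝ) * (Fintype.card V : ℝ), ?_⟩
  rintro x ⟨f, hf2, -, rfl⟩
  have hdist : ∀ v w : V, G.dist v w ≤ M := fun v w =>
    le_trans (Finset.le_sup (Finset.mem_univ w))
      (Finset.le_sup (f := fun v : V => Finset.univ.sup fun w : V => G.dist v w)
        (Finset.mem_univ v))
  calc ∑ v, ∑ w, (G.dist v w : ℝ) * f v * f w
      ≤ ∑ v, ∑ w, (M : ℝ) * (|f v| * |f w|) := by
        refine Finset.sum_le_sum fun v _ => Finset.sum_le_sum fun w _ => ?_
        calc (G.dist v w : ℝ) * f v * f w ≤ |(G.dist v w : ℝ) * f v * f w| := le_abs_self _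
          _ = (G.dist v w : ℝ) * (|f v| * |f w|) := by
              rw [abs_mul, abs_mul,
                abs_of_nonneg (by positivity : (0:ℝ) ≤ (G.dist v w : ℝ)), mul_assoc]
          _ ≤ (M : ℝ) * (|f v| * |f w|) := by
              refine mul_le_mul_of_nonneg_right ?_ (by positivity)
              exact_mod_cast hdist v w
    _ = (M : ℝ) * ((∑ v, |f v|) * (∑ w, |f w|)) := by
        rw [Finset.sum_mul_sum, Finset.mul_sum]
        exact Finset.sum_congr rfl fun v _ => by rw [Finset.mul_sum]
    _ ≤ (M : ℝ) * (Fintype.card V : ℝ) := by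
        refine mul_le_mul_of_nonneg_left ?_ (by positivity)
        have h := sq_sum_le_card_mul_sum_sq (s := Finset.univ) (f := fun v : V => |f v|)
        simp only [sq_abs] at h
        rw [hf2, mul_one, Finset.card_univ] at h
        calc (∑ v, |f v|) * (∑ w, |f w|) = (∑ v, |f v|) ^ 2 := (sq _).symm
          _ ≤ (Fintype.card V : ℝ) := h

/-- if a finite connected graph G on at least d+1 vertices has
diameter at least d (with d ≥ 1), then QEC(P_{d+1}) ≤ QEC(G). -/
theorem qec_path_le_of_diam {V : Type*} [Fintype V]
    (G : SimpleGraph V) (hG : G.Connected) (d : ℕ) (hd : 1 ≤ d)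
    (hcard : d + 1 ≤ Fintype.card V)
    (hdiam : ∃ i j : V, d ≤ G.dist i j) :
    qecPath (d + 1) ≤ QEC G := by
  classical
  obtain ⟨i, j, hij⟩ := hdiam
  obtain ⟨p, hp⟩ := hG.exists_walk_length_eq_dist i j
  have hlen : d ≤ p.length := hp ▸ hij
  set e : Fin (d + 1) → V := fun k => p.getVert k.val with he
  have key : ∀ k l : Fin (d + 1), k.val ≤ l.val →
      G.dist (e k) (e l) = l.val - k.val := by
    intro k l hkl
    exact dist_getVert_eq G hG p hp hkl (le_trans (Nat.le_of_lt_succ l.isLt) hlen)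
  have hinj : Function.Injective e := by
    intro k l h
    by_contra hne
    have hv : k.val ≠ l.val := fun hh => hne (Fin.ext hh)
    rcases Nat.lt_or_ge k.val l.val with hlt | hge
    · have hk := key k l hlt.le
      rw [h, SimpleGraph.dist_self] at hk
      omega
    · have hlt : l.val < k.val := lt_of_le_of_ne hge hv.symm
      have hk := key l k hge
      rw [h, SimpleGraph.dist_self] at hk
      omega
  have ecast : ∀ k l : Fin (d + 1),
      (G.dist (e k) (e l) : ℝ) = |(k.val : ℝ) - (l.val : ℝ)| := by
    intro k l
    rcases le_total k.val l.val with h | h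
    · rw [key k l h, Nat.cast_sub h, abs_sub_comm,
        abs_of_nonneg (sub_nonneg.mpr (by exact_mod_cast h))]
    · rw [SimpleGraph.dist_comm, key l k h, Nat.cast_sub h,
        abs_of_nonneg (sub_nonneg.mpr (by exact_mod_cast h))]
  apply csSup_le_csSup (qec_set_bddAbove G)
  · -- nonempty
    set a : ℝ := Real.sqrt (1 / 2) with ha
    have ha2 : a ^ 2 = 1 / 2 := Real.sq_sqrt (by norm_num)
    set k0 : Fin (d + 1) := ⟨0, by omega⟩ with hk0
    set k1 : Fin (d + 1) := ⟨1, by omega⟩ with hk1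
    have hne : k0 ≠ k1 := by simp [hk0, hk1, Fin.ext_iff]
    set f : Fin (d + 1) → ℝ := fun k => if k = k0 then a else if k = k1 then -a else 0 with hf
    have hsupp : ∀ k, k ∉ ({k0, k1} : Finset (Fin (d + 1))) → f k = 0 := by
      intro k hk
      simp only [Finset.mem_insert, Finset.mem_singleton, not_or] at hk
      simp [hf, hk.1, hk.2]
    refine ⟨∑ k, ∑ l, |(k.val : ℝ) - (l.val : ℝ)| * f k * f l, f, ?_, ?_, rfl⟩
    · rw [← Finset.sum_subset (Finset.subset_univ ({k0, k1} : Finset (Fin (d + 1))))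
        (fun k _ hk => by rw [hsupp k hk]; ring)]
      rw [Finset.sum_pair hne]
      simp [hf, hne, if_neg hne.symm, ha2]
      ring
    · rw [← Finset.sum_subset (Finset.subset_univ ({k0, k1} : Finset (Fin (d + 1))))
        (fun k _ hk => hsupp k hk)]
      rw [Finset.sum_pair hne]
      simp [hf, hne, if_neg hne.symm]
  · -- subset
    rintro x ⟨f, hf2, hf1, rfl⟩
    set g : V → ℝ := fun v => if hv : ∃ k, e k = v then f hv.choose else 0 with hg
    have hge : ∀ k, g (e k) = f k := by
      intro k
      have hv : ∃ k', e k' = e k := ⟨k, rfl⟩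
      rw [hg]
      simp only [dif_pos hv]
      exact congrArg f (hinj hv.choose_spec)
    have hg0 : ∀ v, (∀ k, e k ≠ v) → g v = 0 := by
      intro v hv
      rw [hg]
      exact dif_neg (fun ⟨k, hk⟩ => hv k hk)
    have sum_eq : ∀ h : V → ℝ, (∀ v, (∀ k, e k ≠ v) → h v = 0) →
        ∑ v, h v = ∑ k, h (e k) := by
      intro h h0
      rw [← Finset.sum_image (f := h) (g := e) (s := Finset.univ)
        (fun a _ b _ hab => hinj hab)]
      exact (Finset.sum_subset (Finset.subset_univ _) fun v _ hv =>
        h0 v fun k hk => hv (Finset.mem_image.mpr ⟨k, Finset.mem_univ k, hk⟩)).symm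
    have inner : ∀ k, ∑ w, (G.dist (e k) w : ℝ) * g (e k) * g w
        = ∑ l, |(k.val : ℝ) - (l.val : ℝ)| * f k * f l := by
      intro k
      rw [sum_eq (fun w => (G.dist (e k) w : ℝ) * g (e k) * g w)
        (fun w hw => by beta_reduce; rw [hg0 w hw]; ring)]
      exact Finset.sum_congr rfl fun l _ => by rw [hge, hge, ecast]
    refine ⟨g, ?_, ?_, ?_⟩
    · rw [sum_eq (fun v => g v ^ 2) (fun v hv => by beta_reduce; rw [hg0 v hv]; ring)]
      simp_rw [hge]
      exact hf2
    · rw [sum_eq g hg0]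
      simp_rw [hge]
      exact hf1
    · rw [sum_eq (fun v => ∑ w, (G.dist v w : ℝ) * g v * g w)
        (fun v hv => by
          refine Finset.sum_eq_zero fun w _ => ?_
          rw [hg0 v hv]; ring)]
      exact (Finset.sum_congr rfl fun k _ => inner k).symm
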